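/- For each of the four pairs (λ, p) given by (−1, (1,0,0,0)), (−1/2, (1,1,0,0)), (−1/3, (1,1,1,0)), (−1/4, (1,1,1,1)), the polynomial F = f0 + λ·q² ∈ ℂ[x0,x1,x2,x3] satisfies: F(p) = 0, all four partial derivatives of F vanish at p, and the 4×4 Hessian matrix of second partial derivatives of F evaluated at p has rank 3. Hence p is an ordinary double point (node) of the quartic surface {F = 0} in ℙ³(ℂ). -/

import Mathlib

/-!
Let `p` have all coordinates in `{0, 1}` and `λ q(p) = -1` (the four pairs: `k` ones and
`λ = -1/k`). Then `f0(p) = q(p)`, so `F(p) = q(p) (1 + λ q(p)) = 0`, and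
`∂ⱼF(p) = 4 pⱼ (pⱼ² + λ q(p)) = 4 pⱼ (pⱼ - 1) = 0`. The Hessian at `p` is
`diag(12 pⱼ² + 4 λ q(p)) + 8 λ p pᵀ = diag(12 pⱼ - 4) + 8 λ p pᵀ`, whose diagonal part is
invertible; solving `H v = 0` coordinatewise gives `v = -λ (p ⬝ v) p`, so the kernel is the line
`ℂ p` and the rank is `3`.
-/

open MvPolynomial

noncomputable def q : MvPolynomial (Fin 4) ℂ := X 0 ^ 2 + X 1 ^ 2 + X 2 ^ 2 + X 3 ^ 2
noncomputable def f0 : MvPolynomial (Fin 4) ℂ := X 0 ^ 4 + X 1 ^ 4 + X 2 ^ 4 + X 3 ^ 4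

/-- The Hessian matrix of a polynomial F at a point p. -/
noncomputable def hessianAt (F : MvPolynomial (Fin 4) ℂ) (p : Fin 4 → ℂ) :
    Matrix (Fin 4) (Fin 4) ℂ :=
  Matrix.of fun i j => eval p (pderiv i (pderiv j F))

theorem Matrix.rank_eq_card_sub_one_of_ker_eq_span_singleton {K n : Type*} [Field K] [Fintype n]
    {A : Matrix n n K} {v : n → K} (hv : v ≠ 0) (hker : LinearMap.ker A.mulVecLin = K ∙ v) :
    A.rank = Fintype.card n - 1 := by
  have := LinearMap.finrank_range_add_finrank_ker A.mulVecLin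
  rw [hker, finrank_span_singleton hv, Module.finrank_fintype_fun_eq_card] at this
  rw [Matrix.rank]
  omega

def IsNode (F : MvPolynomial (Fin 4) ℂ) (p : Fin 4 → ℂ) : Prop :=
  eval p F = 0 ∧ (∀ i, eval p (pderiv i F) = 0) ∧ (hessianAt F p).rank = 3

lemma eval_q (p : Fin 4 → ℂ) : eval p q = p ⬝ᵥ p := by
  simp [q, dotProduct, Fin.sum_univ_four, sq]

lemma eval_f0 (p : Fin 4 → ℂ) : eval p f0 = ∑ i, p i ^ 4 := by
  simp [f0, Fin.sum_univ_four]

lemma pderiv_f0 (j : Fin 4) : pderiv j f0 = 4 * X j ^ 3 := by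
  fin_cases j <;> simp [f0, pderiv_X]

lemma pderiv_q (j : Fin 4) : pderiv j q = 2 * X j := by
  fin_cases j <;> simp [q, pderiv_X]

lemma pderiv_f0_add_C_mul_q_sq (l : ℂ) (j : Fin 4) :
    pderiv j (f0 + C l * q ^ 2) = 4 * X j ^ 3 + 4 * C l * q * X j := by
  simp only [map_add, pderiv_mul, pderiv_C, pderiv_pow, pderiv_f0, pderiv_q]
  ring

lemma hessianAt_f0_add_C_mul_q_sq (l : ℂ) (p : Fin 4 → ℂ) :
    hessianAt (f0 + C l * q ^ 2) p =
      Matrix.diagonal (fun j => 12 * p j ^ 2 + 4 * l * eval p q) +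
        (8 * l) • Matrix.vecMulVec p p := by
  ext i j
  have h4 : pderiv i (4 : MvPolynomial (Fin 4) ℂ) = 0 := Derivation.map_natCast _ 4
  simp only [hessianAt, Matrix.of_apply]
  rw [pderiv_f0_add_C_mul_q_sq]
  simp only [map_add, map_mul, pderiv_mul, pderiv_pow, pderiv_X, pderiv_q, pderiv_C, h4]
  rcases eq_or_ne i j with rfl | hij
  · simp [Matrix.vecMulVec_apply]; ring
  · simp [Matrix.diagonal_apply_ne _ hij, Matrix.vecMulVec_apply, hij.symm]; ring

open scoped Matrix in
lemma hessianAt_f0_add_C_mul_q_sq_mulVec (l : ℂ) (p v : Fin 4 → ℂ) (i : Fin 4) :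
    (hessianAt (f0 + C l * q ^ 2) p *ᵥ v) i =
      (12 * p i ^ 2 + 4 * l * eval p q) * v i + 8 * l * (p ⬝ᵥ v) * p i := by
  simp only [hessianAt_f0_add_C_mul_q_sq, Matrix.add_mulVec, Matrix.smul_mulVec,
    Matrix.mulVec_diagonal, Matrix.vecMulVec_mulVec, Pi.add_apply, Pi.smul_apply, smul_eq_mul,
    MulOpposite.smul_eq_mul_unop, MulOpposite.unop_op]
  ring

section IdempotentPoint

variable {l : ℂ} {p : Fin 4 → ℂ} (hp : ∀ i, p i ^ 2 = p i) (hl : l * eval p q = -1)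
include hp hl

lemma eval_f0_add_C_mul_q_sq_eq_zero : eval p (f0 + C l * q ^ 2) = 0 := by
  have hf0 : eval p f0 = eval p q := by
    simp only [eval_f0, eval_q, dotProduct, ← sq]
    refine Finset.sum_congr rfl fun i _ => ?_
    rw [show 4 = 2 * 2 from rfl, pow_mul, hp, hp]
  simp only [map_add, map_mul, map_pow, eval_C, hf0]
  linear_combination eval p q * hl

lemma eval_pderiv_f0_add_C_mul_q_sq_eq_zero (i : Fin 4) :
    eval p (pderiv i (f0 + C l * q ^ 2)) = 0 := by
  rw [pderiv_f0_add_C_mul_q_sq]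
  simp only [map_add, map_mul, map_pow, eval_C, eval_X, map_ofNat]
  linear_combination (4 * p i + 4) * hp i + 4 * p i * hl

lemma ker_hessianAt_f0_add_C_mul_q_sq :
    LinearMap.ker (hessianAt (f0 + C l * q ^ 2) p).mulVecLin = ℂ ∙ p := by
  ext v
  simp only [LinearMap.mem_ker, Matrix.mulVecLin_apply, Submodule.mem_span_singleton]
  constructor
  · intro hv
    refine ⟨-l * (p ⬝ᵥ v), funext fun i => ?_⟩
    have hi := congrFun hv i
    rw [hessianAt_f0_add_C_mul_q_sq_mulVec, Pi.zero_apply] at hi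
    rw [Pi.smul_apply, smul_eq_mul]
    rcases mul_eq_zero.mp (show p i * (p i - 1) = 0 by linear_combination hp i) with h0 | h1
    · rw [h0] at hi ⊢
      linear_combination hi / 4 - v i * hl
    · rw [sub_eq_zero.mp h1] at hi ⊢
      linear_combination -hi / 8 + v i * hl / 2
  · rintro ⟨a, rfl⟩
    funext i
    rw [hessianAt_f0_add_C_mul_q_sq_mulVec]
    simp only [Pi.smul_apply, dotProduct_smul, smul_eq_mul, ← eval_q, Pi.zero_apply]
    linear_combination 12 * a * (p i + 1) * hp i + 12 * a * p i * hl

lemma rank_hessianAt_f0_add_C_mul_q_sq : (hessianAt (f0 + C l * q ^ 2) p).rank = 3 := by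
  have hp0 : p ≠ 0 := by
    rintro rfl
    simp [q] at hl
  exact Matrix.rank_eq_card_sub_one_of_ker_eq_span_singleton hp0
    (ker_hessianAt_f0_add_C_mul_q_sq hp hl)

theorem isNode_f0_add_C_mul_q_sq : IsNode (f0 + C l * q ^ 2) p :=
  ⟨eval_f0_add_C_mul_q_sq_eq_zero hp hl, eval_pderiv_f0_add_C_mul_q_sq_eq_zero hp hl,
    rank_hessianAt_f0_add_C_mul_q_sq hp hl⟩

end IdempotentPoint

theorem stmt9 :
    ∀ lp ∈ [((-1 : ℂ), (![1, 0, 0, 0] : Fin 4 → ℂ)),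
            (-(1/2), ![1, 1, 0, 0]),
            (-(1/3), ![1, 1, 1, 0]),
            (-(1/4), ![1, 1, 1, 1])],
      eval lp.2 (f0 + C lp.1 * q ^ 2) = 0 ∧
      (∀ i : Fin 4, eval lp.2 (pderiv i (f0 + C lp.1 * q ^ 2)) = 0) ∧
      (hessianAt (f0 + C lp.1 * q ^ 2) lp.2).rank = 3 := by
  intro lp hlp
  simp only [List.mem_cons, List.not_mem_nil, or_false] at hlp
  rcases hlp with rfl | rfl | rfl | rfl <;>
    exact isNode_f0_add_C_mul_q_sq (fun i => by fin_cases i <;> norm_num)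
      (by norm_num [q, Matrix.cons_val_two, Matrix.cons_val_three])
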